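/- For every even integer L ≥ 2, every β ≥ 0 and every ε with 0 < ε < 1/4, the toy-model partition function satisfies Z_Λ(β,ε) ≥ (ε/2)^{L²} · exp(2βL²) + (1 − 4ε)^{L²/2}. -/

import Mathlib

open MeasureTheory Real

/-- The site space: the discrete torus of side `L`. -/
abbrev Torus (L : ℕ) := ZMod L × ZMod L

/-- A configuration of the toy model: one circle-valued spin per site. -/
abbrev Config (L : ℕ) := Torus L → AddCircle (1 : ℝ)

/-- The two unit coordinate vectors `e₁ = (1,0)` and `e₂ = (0,1)`. -/
def coordVec (L : ℕ) : Fin 2 → Torus L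
  | 0 => (1, 0)
  | 1 => (0, 1)

/-- The product of normalized Haar measures on the spins. -/
noncomputable def toyMeasure (L : ℕ) [NeZero L] : Measure (Config L) :=
  Measure.pi fun _ => (AddCircle.haarAddCircle : Measure (AddCircle (1 : ℝ)))

/-- A bond `(x, x + eᵢ)` of the configuration `φ` is `ε`-ordered when
`‖φ x - φ (x + eᵢ)‖ ≤ ε/2`, where `‖·‖` is the quotient norm on `ℝ/ℤ`. -/
def IsOrderedBond (L : ℕ) [NeZero L] (ε : ℝ) (φ : Config L) (x : Torus L) (i : Fin 2) : Prop :=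
  ‖φ x - φ (x + coordVec L i)‖ ≤ ε / 2

noncomputable instance (L : ℕ) [NeZero L] (ε : ℝ) (φ : Config L) (x : Torus L) (i : Fin 2) :
    Decidable (IsOrderedBond L ε φ x i) :=
  Real.decidableLE _ _

/-- The toy Hamiltonian: minus the number of `ε`-ordered bonds. -/
noncomputable def toyH (L : ℕ) [NeZero L] (ε : ℝ) (φ : Config L) : ℝ :=
  -(∑ x : Torus L, ∑ i : Fin 2, if IsOrderedBond L ε φ x i then (1 : ℝ) else 0)

/-- The toy-model partition function. -/
noncomputable def toyZ (L : ℕ) [NeZero L] (β ε : ℝ) : ℝ :=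
  ∫ φ, Real.exp (-β * toyH L ε φ) ∂(toyMeasure L)

/-!
The integrand `exp (β · #ordered bonds)` is nonnegative, at least `1` everywhere and equal to
`exp (2βL²)` on the event that every spin lies within `ε/4` of `0`, which has probability
`(ε/2)^{L²}` and forces all `2L²` bonds to be ordered. Fix a set `S` of `L²/2` sites; the event
that every spin in `S` is more than `2ε` away from `0` has probability `(1 - 4ε)^{L²/2}` and is
disjoint from the first one. Integrating over the two events gives the bound.
-/

lemma card_torus (L : ℕ) [NeZero L] : Fintype.card (Torus L) = L ^ 2 := by
  simp [sq, ZMod.card]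

lemma haarAddCircle_closedBall (x : AddCircle (1 : ℝ)) (r : ℝ) :
    AddCircle.haarAddCircle (Metric.closedBall x r) = ENNReal.ofReal (min 1 (2 * r)) := by
  simpa [AddCircle.volume_eq_smul_haarAddCircle] using
    AddCircle.volume_closedBall 1 r (x := x)

lemma haarAddCircle_compl_closedBall (x : AddCircle (1 : ℝ)) {r : ℝ} (hr₀ : 0 ≤ r)
    (hr : r ≤ 1 / 2) :
    AddCircle.haarAddCircle (Metric.closedBall x r)ᶜ = ENNReal.ofReal (1 - 2 * r) := by
  rw [prob_compl_eq_one_sub measurableSet_closedBall, haarAddCircle_closedBall,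
    min_eq_right (by linarith), ← ENNReal.ofReal_one, ENNReal.ofReal_sub _ (by linarith)]

lemma mul_measureReal_add_mul_measureReal_le_integral {X : Type*} [MeasurableSpace X]
    {μ : Measure X} [IsFiniteMeasure μ] {f : X → ℝ} {s t : Set X} {a b : ℝ}
    (hf : Integrable f μ) (hf₀ : 0 ≤ f) (hst : Disjoint s t) (hs : MeasurableSet s)
    (ht : MeasurableSet t) (ha : ∀ x ∈ s, a ≤ f x) (hb : ∀ x ∈ t, b ≤ f x) :
    a * μ.real s + b * μ.real t ≤ ∫ x, f x ∂μ :=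
  calc a * μ.real s + b * μ.real t ≤ ∫ x in s, f x ∂μ + ∫ x in t, f x ∂μ :=
        add_le_add (setIntegral_ge_of_const_le_real hs (measure_ne_top μ s) ha hf.integrableOn)
          (setIntegral_ge_of_const_le_real ht (measure_ne_top μ t) hb hf.integrableOn)
    _ = ∫ x in s ∪ t, f x ∂μ :=
        (setIntegral_union hst ht hf.integrableOn hf.integrableOn).symm
    _ ≤ ∫ x, f x ∂μ := setIntegral_le_integral hf (.of_forall hf₀)

section ToyModel

variable {L : ℕ} [NeZero L]

instance : IsProbabilityMeasure (toyMeasure L) := by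
  unfold toyMeasure; infer_instance

lemma measureReal_univ_pi_closedBall (c : AddCircle (1 : ℝ)) {r : ℝ} (hr₀ : 0 ≤ r)
    (hr : r ≤ 1 / 2) :
    (toyMeasure L).real (Set.univ.pi fun _ => Metric.closedBall c r) = (2 * r) ^ (L ^ 2) := by
  rw [measureReal_def, toyMeasure, Measure.pi_pi]
  simp_rw [haarAddCircle_closedBall, min_eq_right (by linarith : 2 * r ≤ 1)]
  rw [Finset.prod_const, Finset.card_univ, card_torus, ENNReal.toReal_pow,
    ENNReal.toReal_ofReal (by linarith)]

lemma measureReal_pi_compl_closedBall (S : Finset (Torus L)) (c : AddCircle (1 : ℝ))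
    {r : ℝ} (hr₀ : 0 ≤ r) (hr : r ≤ 1 / 2) :
    (toyMeasure L).real ((S : Set (Torus L)).pi fun _ => (Metric.closedBall c r)ᶜ) =
      (1 - 2 * r) ^ S.card := by
  rw [measureReal_def, toyMeasure, Measure.pi_pi_finset]
  simp_rw [haarAddCircle_compl_closedBall _ hr₀ hr]
  rw [Finset.prod_const, ENNReal.toReal_pow, ENNReal.toReal_ofReal (by linarith)]

lemma sum_bonds_one : ∑ _x : Torus L, ∑ _i : Fin 2, (1 : ℝ) = 2 * L ^ 2 := by
  simp
  ring

lemma toyH_nonpos (ε : ℝ) (φ : Config L) : toyH L ε φ ≤ 0 := by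
  unfold toyH
  rw [neg_nonpos]
  positivity

lemma neg_two_mul_sq_le_toyH (ε : ℝ) (φ : Config L) : -(2 * L ^ 2 : ℝ) ≤ toyH L ε φ := by
  rw [toyH, neg_le_neg_iff, ← sum_bonds_one]
  gcongr with x _ i _
  split_ifs <;> norm_num

lemma toyH_eq_of_forall_isOrderedBond {ε : ℝ} {φ : Config L}
    (h : ∀ x i, IsOrderedBond L ε φ x i) : toyH L ε φ = -(2 * L ^ 2) := by
  simp only [toyH, h, if_true, sum_bonds_one]

lemma isOrderedBond_of_forall_norm_le {ε : ℝ} {φ : Config L} (h : ∀ x, ‖φ x‖ ≤ ε / 4)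
    (x : Torus L) (i : Fin 2) : IsOrderedBond L ε φ x i :=
  calc ‖φ x - φ (x + coordVec L i)‖ ≤ ‖φ x‖ + ‖φ (x + coordVec L i)‖ :=
        norm_sub_le _ _
    _ ≤ ε / 2 := by linarith [h x, h (x + coordVec L i)]

lemma measurable_toyH (ε : ℝ) : Measurable (toyH L ε) := by
  have hdist (x y : Torus L) : Measurable fun φ : Config L => ‖φ x - φ y‖ :=
    ((measurable_pi_apply x).sub (measurable_pi_apply y)).norm
  refine (Finset.measurable_sum _ fun x _ => Finset.measurable_sum _ fun i _ => ?_).neg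
  exact Measurable.ite (measurableSet_le (hdist x _) measurable_const) measurable_const
    measurable_const

lemma integrable_exp_neg_mul_toyH (β ε : ℝ) :
    Integrable (fun φ => rexp (-β * toyH L ε φ)) (toyMeasure L) := by
  refine .of_bound ((measurable_toyH ε).const_mul (-β)).exp.aestronglyMeasurable
    (rexp (|β| * (2 * L ^ 2))) (.of_forall fun φ => ?_)
  have hH : |toyH L ε φ| ≤ 2 * L ^ 2 :=
    abs_le.2 ⟨neg_two_mul_sq_le_toyH ε φ, (toyH_nonpos ε φ).trans (by positivity)⟩
  rw [norm_of_nonneg (exp_pos _).le, exp_le_exp]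
  calc -β * toyH L ε φ ≤ |-β * toyH L ε φ| := le_abs_self _
    _ = |β| * |toyH L ε φ| := by rw [abs_mul, abs_neg]
    _ ≤ |β| * (2 * L ^ 2) := by gcongr

end ToyModel

/-- the two-term lower bound on the toy-model partition function. -/
theorem toy_partition_lower_bound (L : ℕ) (hL : 2 ≤ L) (β ε : ℝ)
    (hβ : 0 ≤ β) (hε : 0 < ε) (hε' : ε < 1 / 4) :
    haveI : NeZero L := ⟨by omega⟩
    toyZ L β ε ≥
      (ε / 2) ^ (L ^ 2) * Real.exp (2 * β * L ^ 2) + (1 - 4 * ε) ^ (L ^ 2 / 2) := by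
  have : NeZero L := ⟨by omega⟩
  obtain ⟨S, -, hS⟩ := Finset.exists_subset_card_eq (s := (Finset.univ : Finset (Torus L)))
    (n := L ^ 2 / 2) (by rw [Finset.card_univ, card_torus]; omega)
  obtain ⟨y, hy⟩ : S.Nonempty := Finset.card_pos.1 <| by
    rw [hS]; have : 4 ≤ L ^ 2 := by nlinarith
    omega
  set ordered := Set.univ.pi fun _ : Torus L => Metric.closedBall (0 : AddCircle (1 : ℝ)) (ε / 4)
  set spread :=
    (S : Set (Torus L)).pi fun _ => (Metric.closedBall (0 : AddCircle (1 : ℝ)) (2 * ε))ᶜ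
  have hdisj : Disjoint ordered spread := Set.disjoint_left.2 fun φ hφ hφ' =>
    hφ' y hy (Metric.closedBall_subset_closedBall (by linarith) (hφ y trivial))
  have hH : ∀ φ ∈ ordered, toyH L ε φ = -(2 * L ^ 2) := fun φ hφ =>
    toyH_eq_of_forall_isOrderedBond <| isOrderedBond_of_forall_norm_le fun x =>
      mem_closedBall_zero_iff.1 (hφ x trivial)
  have hμA : (toyMeasure L).real ordered = (2 * (ε / 4)) ^ (L ^ 2) :=
    measureReal_univ_pi_closedBall 0 (by linarith) (by linarith)
  have hμB : (toyMeasure L).real spread = (1 - 2 * (2 * ε)) ^ (L ^ 2 / 2) :=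
    hS ▸ measureReal_pi_compl_closedBall S 0 (by linarith) (by linarith)
  calc (ε / 2) ^ (L ^ 2) * rexp (2 * β * L ^ 2) + (1 - 4 * ε) ^ (L ^ 2 / 2)
      = rexp (2 * β * L ^ 2) * (toyMeasure L).real ordered
          + 1 * (toyMeasure L).real spread := by
        rw [hμA, hμB]
        ring
    _ ≤ toyZ L β ε :=
      mul_measureReal_add_mul_measureReal_le_integral (integrable_exp_neg_mul_toyH β ε)
        (fun _ => (exp_pos _).le) hdisj
        (MeasurableSet.univ_pi fun _ => measurableSet_closedBall)
        (MeasurableSet.pi S.countable_toSet fun _ _ => measurableSet_closedBall.compl)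
        (fun φ hφ => le_of_eq <| by rw [hH φ hφ]; ring_nf)
        (fun φ _ => one_le_exp <|
          mul_nonneg_of_nonpos_of_nonpos (neg_nonpos.2 hβ) (toyH_nonpos ε φ))
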